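/- arXiv:2308.14134 — 4 statements merged into one kernel-verified Lean document; each statement's English description precedes it below -/
import Mathlib

section
/- Given a linearly ordered finite set S of size n and an integer k with 2k ≤ n, the number of greedy matchings of size k on S equals (n-1)(n-3)⋯(n-2k+1), i.e., the falling double factorial (n-1)^{⎣⎣k⎦⎦}. -/
/-- `M` is a matching on `S`: a set of pairwise-disjoint 2-element subsets of `S`. -/
def IsMatching {α : Type*} (S : Finset α) (M : Finset (Finset α)) : Prop :=
  (∀ e ∈ M, e.card = 2 ∧ e ⊆ S) ∧ ∀ e ∈ M, ∀ f ∈ M, e ≠ f → Disjoint e f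

/-- Greedy matching: empty, or the minimum of `S` is covered by some edge `e ∈ M`
and `M \ {e}` is greedy on `S \ e`. -/
inductive IsGreedy {α : Type*} [LinearOrder α] : Finset α → Finset (Finset α) → Prop
  | empty (S : Finset α) : IsGreedy S ∅
  | step (S : Finset α) (M : Finset (Finset α)) (e : Finset α) (he : e ∈ M)
      (hS : S.Nonempty) (hmin : S.min' hS ∈ e) (h : IsGreedy (S \ e) (M.erase e)) :
      IsGreedy S M

section Aux

variable {α : Type*} [LinearOrder α]

/-- A pair `{m, x}` is never an edge of a matching on `S \ {m, x}`. -/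
lemma pair_notMem' {S : Finset α} {m x : α} {M' : Finset (Finset α)}
    (hM' : IsMatching (S \ {m, x}) M') {f : Finset α} (hmf : m ∈ f) : f ∉ M' := by
  intro h
  have := (hM'.1 _ h).2 hmf
  simp [Finset.mem_sdiff] at this

lemma pair_notMem {S : Finset α} {m x : α} {M' : Finset (Finset α)}
    (hM' : IsMatching (S \ {m, x}) M') : ({m, x} : Finset α) ∉ M' :=
  pair_notMem' hM' (Finset.mem_insert_self m {x})

/-- Backward direction: gluing an edge through the minimum onto a greedy matching. -/
lemma lemB {S : Finset α} (hS : S.Nonempty) {x : α} {k : ℕ} {M' : Finset (Finset α)}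
    (hx : x ∈ S) (hmx : S.min' hS ≠ x)
    (h1 : IsMatching (S \ {S.min' hS, x}) M')
    (h2 : IsGreedy (S \ {S.min' hS, x}) M') (h3 : M'.card = k) :
    IsMatching S (insert {S.min' hS, x} M') ∧
      IsGreedy S (insert {S.min' hS, x} M') ∧
      (insert {S.min' hS, x} M').card = k + 1 := by
  classical
  set m := S.min' hS with hm
  have hmS : m ∈ S := S.min'_mem hS
  have hnotmem : ({m, x} : Finset α) ∉ M' := pair_notMem h1
  have hcard2 : ({m, x} : Finset α).card = 2 := Finset.card_pair hmx
  have hsubS : ({m, x} : Finset α) ⊆ S := by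
    intro a ha
    rcases Finset.mem_insert.mp ha with rfl | ha
    · exact hmS
    · simpa using Finset.mem_singleton.mp ha ▸ hx
  have hdisj : ∀ f ∈ M', Disjoint ({m, x} : Finset α) f := by
    intro f hf
    have hfsub := (h1.1 f hf).2
    have : Disjoint f ({m, x} : Finset α) := (Finset.subset_sdiff.mp hfsub).2
    exact this.symm
  refine ⟨⟨?_, ?_⟩, ?_, ?_⟩
  · intro e he
    rcases Finset.mem_insert.mp he with rfl | he
    · exact ⟨hcard2, hsubS⟩
    · refine ⟨(h1.1 e he).1, (h1.1 e he).2.trans (Finset.sdiff_subset)⟩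
  · intro e he f hf hef
    rcases Finset.mem_insert.mp he with rfl | he <;>
      rcases Finset.mem_insert.mp hf with rfl | hf
    · exact absurd rfl hef
    · exact hdisj f hf
    · exact (hdisj e he).symm
    · exact h1.2 e he f hf hef
  · refine IsGreedy.step S _ {m, x} (Finset.mem_insert_self _ _) hS
      (Finset.mem_insert_self _ _) ?_
    rw [Finset.erase_insert hnotmem]
    exact h2
  · rw [Finset.card_insert_of_notMem hnotmem, h3]

/-- Forward direction: decomposing a nonempty greedy matching. -/
lemma lemA {S : Finset α} (hS : S.Nonempty) {k : ℕ} {M : Finset (Finset α)}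
    (h1 : IsMatching S M) (h2 : IsGreedy S M) (h3 : M.card = k + 1) :
    ∃ x ∈ S.erase (S.min' hS),
      IsMatching (S \ {S.min' hS, x}) (M.erase {S.min' hS, x}) ∧
      IsGreedy (S \ {S.min' hS, x}) (M.erase {S.min' hS, x}) ∧
      (M.erase {S.min' hS, x}).card = k ∧
      M = insert {S.min' hS, x} (M.erase {S.min' hS, x}) := by
  classical
  set m := S.min' hS with hm
  cases h2 with
  | empty => simp at h3
  | step S M e he hS' hmin h =>
    have hmin' : m ∈ e := hmin
    have hcard2 : e.card = 2 := (h1.1 e he).1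
    have hesub : e ⊆ S := (h1.1 e he).2
    obtain ⟨a, b, hab, rfl⟩ := Finset.card_eq_two.mp hcard2
    -- identify e = {m, x}
    have : ∃ x, x ≠ m ∧ ({a, b} : Finset α) = {m, x} := by
      rcases Finset.mem_insert.mp hmin' with rfl | hb
      · exact ⟨b, fun hbm => hab hbm.symm, rfl⟩
      · have hbm : b = m := (Finset.mem_singleton.mp hb).symm
        rw [hbm] at hab
        exact ⟨a, hab, by rw [hbm, Finset.pair_comm]⟩
    obtain ⟨x, hxm, hex⟩ := this
    rw [hex] at he hesub h
    have hxS : x ∈ S := hesub (by simp)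
    refine ⟨x, Finset.mem_erase.mpr ⟨hxm, hxS⟩, ⟨?_, ?_⟩, h, ?_, ?_⟩
    · intro f hf
      have hfM := Finset.mem_of_mem_erase hf
      have hfne : f ≠ ({m, x} : Finset α) := Finset.ne_of_mem_erase hf
      refine ⟨(h1.1 f hfM).1, ?_⟩
      rw [Finset.subset_sdiff]
      exact ⟨(h1.1 f hfM).2, h1.2 f hfM _ he hfne⟩
    · intro f hf g hg hfg
      exact h1.2 f (Finset.mem_of_mem_erase hf) g (Finset.mem_of_mem_erase hg) hfg
    · have := Finset.card_erase_of_mem he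
      omega
    · exact (Finset.insert_erase he).symm

end Aux

/-- The number of greedy matchings of size `k` on a linearly ordered set of size `n`
is the falling double factorial `(n-1)(n-3)⋯(n-2k+1)`. -/
theorem stmt1 {α : Type*} [Fintype α] [LinearOrder α] (S : Finset α) (n k : ℕ)
    (hn : S.card = n) (hk : 2 * k ≤ n) :
    Set.ncard {M : Finset (Finset α) |
        IsMatching S M ∧ IsGreedy S M ∧ M.card = k}
      = ∏ j ∈ Finset.range k, (n - 1 - 2 * j) := by
  classical
  induction k generalizing S n with
  | zero =>
    have hset : {M : Finset (Finset α) | IsMatching S M ∧ IsGreedy S M ∧ M.card = 0}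
        = {(∅ : Finset (Finset α))} := by
      ext M
      simp only [Set.mem_setOf_eq, Set.mem_singleton_iff]
      constructor
      · rintro ⟨-, -, h⟩; exact Finset.card_eq_zero.mp h
      · rintro rfl
        exact ⟨⟨by simp, by simp⟩, IsGreedy.empty S, rfl⟩
    rw [hset]
    simp
  | succ k ih =>
    subst hn
    have hS : S.Nonempty := by rw [← Finset.card_pos]; omega
    set m := S.min' hS with hm
    have hmS : m ∈ S := S.min'_mem hS
    -- convert set to filter
    have hconv : ∀ (T : Finset α) (j : ℕ),
        {M : Finset (Finset α) | IsMatching T M ∧ IsGreedy T M ∧ M.card = j}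
          = ↑(Finset.univ.filter fun M : Finset (Finset α) =>
              IsMatching T M ∧ IsGreedy T M ∧ M.card = j) := by
      intro T j; ext M; simp
    rw [hconv, Set.ncard_coe_finset]
    have key : (Finset.univ.filter fun M : Finset (Finset α) =>
          IsMatching S M ∧ IsGreedy S M ∧ M.card = k + 1)
        = (S.erase m).biUnion (fun x =>
            (Finset.univ.filter fun M' : Finset (Finset α) =>
              IsMatching (S \ {m, x}) M' ∧ IsGreedy (S \ {m, x}) M' ∧ M'.card = k).image
              (insert {m, x})) := by
      ext M
      simp only [Finset.mem_filter, Finset.mem_univ, true_and, Finset.mem_biUnion,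
        Finset.mem_image]
      constructor
      · rintro ⟨h1, h2, h3⟩
        obtain ⟨x, hx, hA, hB, hC, hD⟩ := lemA hS h1 h2 h3
        exact ⟨x, hx, M.erase {m, x}, ⟨hA, hB, hC⟩, hD.symm⟩
      · rintro ⟨x, hx, M', ⟨hA, hB, hC⟩, rfl⟩
        obtain ⟨hxm, hxS⟩ := Finset.mem_erase.mp hx
        exact lemB hS hxS (Ne.symm hxm) hA hB hC
    rw [key]
    rw [Finset.card_biUnion ?disj]
    case disj =>
      intro x hx y hy hxy
      simp only [Finset.disjoint_left, Finset.mem_image, Finset.mem_filter]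
      rintro M ⟨Mx, ⟨-, hMx, -, -⟩, rfl⟩ ⟨My, ⟨-, hMy, -, -⟩, hMy'⟩
      have hymem : ({m, y} : Finset α) ∈ insert ({m, x} : Finset α) Mx := by
        rw [← hMy']; exact Finset.mem_insert_self _ _
      rcases Finset.mem_insert.mp hymem with heq | hmem
      · have hxm := (Finset.mem_erase.mp hx).1
        have hym := (Finset.mem_erase.mp hy).1
        have : y ∈ ({m, x} : Finset α) := heq ▸ (by simp : y ∈ ({m, y} : Finset α))
        rcases Finset.mem_insert.mp this with rfl | hyx
        · exact hym rfl
        · exact hxy ((Finset.mem_singleton.mp hyx).symm) |>.elim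
      · exact pair_notMem' hMx (Finset.mem_insert_self _ _) hmem
    have himg : ∀ x ∈ S.erase m,
        ((Finset.univ.filter fun M' : Finset (Finset α) =>
          IsMatching (S \ {m, x}) M' ∧ IsGreedy (S \ {m, x}) M' ∧ M'.card = k).image
            (insert {m, x})).card
        = ∏ j ∈ Finset.range k, (S.card - 2 - 1 - 2 * j) := by
      intro x hx
      obtain ⟨hxm, hxS⟩ := Finset.mem_erase.mp hx
      have hsub : ({m, x} : Finset α) ⊆ S := by
        intro a ha
        rcases Finset.mem_insert.mp ha with rfl | ha
        · exact hmS
        · simpa using Finset.mem_singleton.mp ha ▸ hxS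
      have hcards : (S \ {m, x}).card = S.card - 2 := by
        rw [Finset.card_sdiff_of_subset hsub, Finset.card_pair (Ne.symm hxm)]
      rw [Finset.card_image_of_injOn]
      · have := ih (S \ {m, x}) (S.card - 2) hcards (by omega)
        rw [hconv, Set.ncard_coe_finset] at this
        exact this
      · intro M1 hM1 M2 hM2 heq
        simp only [Finset.coe_filter, Set.mem_setOf_eq, Finset.mem_univ, true_and] at hM1 hM2
        have h1 := pair_notMem hM1.1
        have h2 := pair_notMem hM2.1
        have := congrArg (Finset.erase · ({m, x} : Finset α)) heq
        simpa [Finset.erase_insert h1, Finset.erase_insert h2] using this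
    rw [Finset.sum_congr rfl himg, Finset.sum_const, Finset.card_erase_of_mem hmS,
      smul_eq_mul]
    rw [Finset.prod_range_succ']
    have hcongr : ∀ j ∈ Finset.range k, S.card - 1 - 2 * (j + 1) = S.card - 2 - 1 - 2 * j := by
      intro j _; omega
    rw [Finset.prod_congr rfl hcongr, mul_comm]
    norm_num
end

section
/- Let h : Σ^b → R be a simple tabulation hash function with fully random, independent tables T_1,…,T_b : Σ → R, where R is a finite abelian group under XOR (R = F_2^r). Then for a finite set Y ⊆ Σ^b of keys, the restriction h|_Y is uniformly distributed over R^Y if and only if Y is linearly independent as a set of vectors in F_2^{{1,…,b}×Σ}. -/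
/-- The indicator vector in `F₂^{[b]×Σ}` of the position characters of a key. -/
def keyVec {b : ℕ} {Alph : Type*} [DecidableEq Alph] (x : Fin b → Alph) :
    Fin b × Alph → ZMod 2 := fun p => if x p.1 = p.2 then 1 else 0

section Aux

variable {b r : ℕ} {Alph : Type*} [Fintype Alph] [DecidableEq Alph]

/-- The simple-tabulation hash, restricted to `Y`, as a linear map in the tables. -/
def hashL (r : ℕ) (Y : Finset (Fin b → Alph)) :
    (Fin b → Alph → (Fin r → ZMod 2)) →ₗ[ZMod 2] (↥Y → Fin r → ZMod 2) where
  toFun T := fun y => ∑ i, T i (y.1 i)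
  map_add' T T' := by
    funext y
    simp [Finset.sum_add_distrib]
  map_smul' c T := by
    funext y
    simp [Finset.smul_sum]

@[simp] lemma hashL_apply (Y : Finset (Fin b → Alph))
    (T : Fin b → Alph → (Fin r → ZMod 2)) (y : Y) :
    hashL r Y T y = ∑ i, T i (y.1 i) := rfl

lemma hash_eq_sum (T : Fin b → Alph → (Fin r → ZMod 2)) (y : Fin b → Alph) :
    (∑ i, T i (y i)) = ∑ p : Fin b × Alph, keyVec y p • T p.1 p.2 := by
  rw [Fintype.sum_prod_type]
  refine Finset.sum_congr rfl fun i _ => ?_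
  simp [keyVec, ite_smul, Finset.sum_ite_eq]

lemma keyVec_eq_sum (y : Fin b → Alph) :
    keyVec (b := b) y = ∑ p : Fin b × Alph, keyVec y p • Pi.single p (1 : ZMod 2) := by
  funext q
  simp only [Finset.sum_apply, Pi.smul_apply, Pi.single_apply, smul_eq_mul,
    mul_ite, mul_one, mul_zero]
  simp

end Aux

/-- Simple tabulation with uniformly random tables `T : Fin b → Σ → F₂^r` restricted
to a set of keys `Y` is uniformly distributed over `(F₂^r)^Y` (every assignment of
hash values to `Y` has the same number of table realizations) iff `Y` is linearly
independent. -/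
theorem stmt5 {b r : ℕ} (hr : 0 < r) {Alph : Type*} [Fintype Alph] [DecidableEq Alph]
    (Y : Finset (Fin b → Alph)) :
    (∀ φ : (Fin b → Alph) → (Fin r → ZMod 2),
        (Finset.univ.filter (fun T : Fin b → Alph → (Fin r → ZMod 2) =>
            ∀ y ∈ Y, (∑ i, T i (y i)) = φ y)).card * (2 ^ r) ^ Y.card
          = Fintype.card (Fin b → Alph → (Fin r → ZMod 2))) ↔
      LinearIndependent (ZMod 2) (fun y : Y => keyVec y.1) := by
  classical
  set L := hashL (b := b) (Alph := Alph) r Y with hL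
  -- Step 1: rewrite the condition in terms of fibers of `L`.
  have hfilter : ∀ φ : (Fin b → Alph) → (Fin r → ZMod 2),
      (Finset.univ.filter (fun T : Fin b → Alph → (Fin r → ZMod 2) =>
          ∀ y ∈ Y, (∑ i, T i (y i)) = φ y))
        = Finset.univ.filter (fun T : Fin b → Alph → (Fin r → ZMod 2) =>
            L T = fun y : Y => φ y.1) := by
    intro φ
    refine Finset.filter_congr fun T _ => ?_
    simp only [funext_iff, Subtype.forall, hashL_apply, hL]
  have hcond : (∀ φ : (Fin b → Alph) → (Fin r → ZMod 2),
      (Finset.univ.filter (fun T : Fin b → Alph → (Fin r → ZMod 2) =>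
          ∀ y ∈ Y, (∑ i, T i (y i)) = φ y)).card * (2 ^ r) ^ Y.card
        = Fintype.card (Fin b → Alph → (Fin r → ZMod 2)))
      ↔ (∀ ψ : ↥Y → Fin r → ZMod 2,
          (Finset.univ.filter (fun T : Fin b → Alph → (Fin r → ZMod 2) =>
              L T = ψ)).card * (2 ^ r) ^ Y.card
            = Fintype.card (Fin b → Alph → (Fin r → ZMod 2))) := by
    constructor
    · intro H ψ
      have := H (fun x => if h : x ∈ Y then ψ ⟨x, h⟩ else 0)
      rw [hfilter] at this
      have hψ : (fun y : ↥Y =>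
          (fun x => if h : x ∈ Y then ψ ⟨x, h⟩ else 0) y.1) = ψ := by
        funext y
        simp [y.2]
      rw [hψ] at this
      exact this
    · intro H φ
      rw [hfilter]
      exact H _
  rw [hcond]
  constructor
  · -- uniformity → linear independence
    intro H
    rw [Fintype.linearIndependent_iff]
    intro g hg
    by_contra hcon
    push_neg at hcon
    obtain ⟨y0, hy0⟩ := hcon
    -- a nonzero target value
    set e : Fin r → ZMod 2 := fun _ => 1 with he
    -- the fiber over `Pi.single y0 e` is nonempty
    obtain ⟨T, hT⟩ : ∃ T, L T = Pi.single y0 e := by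
      by_contra hempty
      push_neg at hempty
      have h0 : (Finset.univ.filter (fun T : Fin b → Alph → (Fin r → ZMod 2) =>
          L T = Pi.single y0 e)) = ∅ := by
        refine Finset.filter_false_of_mem fun T _ => hempty T
      have := H (Pi.single y0 e)
      rw [h0] at this
      simp only [Finset.card_empty, Nat.zero_mul] at this
      have : 0 < Fintype.card (Fin b → Alph → (Fin r → ZMod 2)) := Fintype.card_pos
      omega
    -- compute `∑ y, g y • L T y` in two ways
    have h1 : ∑ y : Y, g y • (L T y) = (0 : Fin r → ZMod 2) := by
      calc ∑ y : Y, g y • (L T y)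
          = ∑ y : Y, ∑ p : Fin b × Alph, (g y * keyVec y.1 p) • T p.1 p.2 := by
            refine Finset.sum_congr rfl fun y _ => ?_
            rw [hashL_apply, hash_eq_sum, Finset.smul_sum]
            simp [smul_smul]
        _ = ∑ p : Fin b × Alph, (∑ y : Y, g y * keyVec y.1 p) • T p.1 p.2 := by
            rw [Finset.sum_comm]
            simp [Finset.sum_smul]
        _ = 0 := by
            refine Finset.sum_eq_zero fun p _ => ?_
            have hp := congrFun hg p
            simp only [Finset.sum_apply, Pi.smul_apply, smul_eq_mul, Pi.zero_apply] at hp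
            rw [hp, zero_smul]
    have h2 : ∑ y : Y, g y • (L T y) = g y0 • e := by
      rw [hT]
      have : ∀ y : Y, g y • (Pi.single y0 e : ↥Y → Fin r → ZMod 2) y
          = if y = y0 then g y • e else 0 := by
        intro y
        by_cases h : y = y0 <;> simp [Pi.single_apply, h]
      rw [Finset.sum_congr rfl fun y _ => this y]
      simp [Finset.sum_ite_eq']
    rw [h1] at h2
    have hone : g y0 = 1 := by
      revert hy0; generalize g y0 = c; revert c; decide
    rw [hone, one_smul] at h2
    have := congrFun h2.symm ⟨0, hr⟩
    simp [he] at this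
  · -- linear independence → uniformity
    intro li
    -- surjectivity of L
    have hsurj : Function.Surjective L := by
      intro ψ
      have hker : LinearMap.ker
          (Finsupp.linearCombination (ZMod 2) (fun y : Y => keyVec y.1)) = ⊥ :=
        LinearMap.ker_eq_bot.mpr li
      obtain ⟨g, hg⟩ := LinearMap.exists_leftInverse_of_injective _ hker
      set f : ((Fin b × Alph → ZMod 2)) →ₗ[ZMod 2] (Fin r → ZMod 2) :=
        (Finsupp.linearCombination (ZMod 2) ψ).comp g with hf
      refine ⟨fun i a => f (Pi.single (i, a) 1), ?_⟩
      funext y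
      rw [hashL_apply,
        hash_eq_sum (fun i a => f (Pi.single (i, a) 1)) y.1]
      have : ∑ p : Fin b × Alph, keyVec y.1 p • f (Pi.single p 1)
          = f (∑ p : Fin b × Alph, keyVec y.1 p • Pi.single p 1) := by
        rw [map_sum]
        exact Finset.sum_congr rfl fun p _ => (map_smul f _ _).symm
      rw [this, ← keyVec_eq_sum]
      have hkey : keyVec y.1
          = Finsupp.linearCombination (ZMod 2) (fun y : Y => keyVec y.1)
              (Finsupp.single y 1) := by
        rw [Finsupp.linearCombination_single, one_smul]
      rw [hf]
      simp only [LinearMap.comp_apply]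
      rw [hkey]
      have hgy : g ((Finsupp.linearCombination (ZMod 2) (fun y : Y => keyVec y.1))
          (Finsupp.single y 1)) = Finsupp.single y 1 := by
        have := congrFun (congrArg (fun m => m.toFun) hg) (Finsupp.single y 1)
        simpa using this
      rw [hgy, Finsupp.linearCombination_single, one_smul]
    -- all fibers have the same cardinality as the fiber over 0
    set c : ℕ := (Finset.univ.filter (fun T : Fin b → Alph → (Fin r → ZMod 2) =>
        L T = 0)).card with hc
    have hfib : ∀ ψ : ↥Y → Fin r → ZMod 2,
        (Finset.univ.filter (fun T : Fin b → Alph → (Fin r → ZMod 2) =>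
            L T = ψ)).card = c := by
      intro ψ
      obtain ⟨T0, hT0⟩ := hsurj ψ
      rw [hc]
      refine Finset.card_bij' (fun T _ => T - T0) (fun T _ => T + T0) ?_ ?_ ?_ ?_
      · intro T hT
        simp only [Finset.mem_filter, Finset.mem_univ, true_and] at hT ⊢
        rw [map_sub, hT, hT0, sub_self]
      · intro T hT
        simp only [Finset.mem_filter, Finset.mem_univ, true_and] at hT ⊢
        rw [map_add, hT, hT0, zero_add]
      · intro T _; simp
      · intro T _; simp
    intro ψ
    rw [hfib ψ]
    -- total count
    have htotal : Fintype.card (Fin b → Alph → (Fin r → ZMod 2))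
        = Fintype.card (↥Y → Fin r → ZMod 2) * c := by
      rw [← Finset.card_univ (α := Fin b → Alph → (Fin r → ZMod 2))]
      rw [Finset.card_eq_sum_card_fiberwise
        (f := fun T => L T) (t := Finset.univ) (fun T _ => Finset.mem_univ _)]
      rw [Finset.sum_congr rfl fun ψ _ => hfib ψ]
      simp [Finset.card_univ, mul_comm]
    have hcardYR : Fintype.card (↥Y → Fin r → ZMod 2) = (2 ^ r) ^ Y.card := by
      rw [Fintype.card_fun, Fintype.card_fun]
      simp [Fintype.card_coe]
    rw [htotal, hcardYR, mul_comm]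
end

section
/- If M is a set of disjoint pairs of keys from Σ^b such that the set of diff-keys {x △ y : {x,y} ∈ M} is linearly independent over F_2, and g : Σ^b → Σ is a simple tabulation function with uniformly random tables (lifted to generalized keys), then the probability that g(x) = g(y) simultaneously for all pairs {x,y} ∈ M equals 1/|Σ|^{|M|}. -/
theorem AddMonoidHom.card_ker_mul_card_of_surjective {G H : Type*} [AddGroup G] [AddGroup H]
    (f : G →+ H) (hf : Function.Surjective f) : Nat.card f.ker * Nat.card H = Nat.card G := by
  rw [← f.ker.card_mul_index, AddSubgroup.index_ker, f.range_eq_top.mpr hf, AddSubgroup.card_top]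

namespace Matrix

section LinearIndependentRows

variable {K ι κ : Type*} [Field K] [Fintype ι] [Fintype κ] {A : Matrix ι κ K}

theorem mulVec_surjective_of_linearIndependent_row (hA : LinearIndependent K A.row) :
    Function.Surjective A.mulVec := by
  have : LinearMap.range A.mulVecLin = ⊤ := Submodule.eq_top_of_finrank_eq <| by
    rw [← rank, hA.rank_matrix, Module.finrank_fintype_fun_eq_card]
  exact LinearMap.range_eq_top.mp this

theorem mul_left_surjective_of_linearIndependent_row (σ : Type*)
    (hA : LinearIndependent K A.row) : Function.Surjective fun X : Matrix κ σ K => A * X := by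
  classical
  obtain ⟨B, hB⟩ :=
    mulVec_surjective_iff_exists_right_inverse.mp (mulVec_surjective_of_linearIndependent_row hA)
  exact fun C => ⟨B * C, show A * (B * C) = C by rw [← Matrix.mul_assoc, hB, Matrix.one_mul]⟩

theorem card_mul_eq_zero_mul_card_of_linearIndependent_row (σ : Type*)
    (hA : LinearIndependent K A.row) :
    Nat.card {X : Matrix κ σ K // A * X = 0} * Nat.card (Matrix ι σ K) =
      Nat.card (Matrix κ σ K) :=
  (mulLeftLinearMap σ K A).toAddMonoidHom.card_ker_mul_card_of_surjective
    (mul_left_surjective_of_linearIndependent_row σ hA)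

end LinearIndependentRows

end Matrix

open Matrix

section Tabulation

variable {b : ℕ} {Alph σ : Type*} [DecidableEq Alph] [Fintype Alph]

theorem keyVec_vecMul (x : Fin b → Alph) (X : Matrix (Fin b × Alph) σ (ZMod 2)) :
    keyVec x ᵥ* X = ∑ i, X (i, x i) := by
  ext j
  simp [vecMul, dotProduct, Fintype.sum_prod_type, keyVec, ite_mul]

theorem keyVec_add_keyVec_vecMul_eq_zero_iff (x y : Fin b → Alph)
    (X : Matrix (Fin b × Alph) σ (ZMod 2)) :
    (keyVec x + keyVec y) ᵥ* X = 0 ↔ ∑ i, X (i, x i) = ∑ i, X (i, y i) := by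
  rw [add_vecMul, keyVec_vecMul, keyVec_vecMul, ← ZModModule.sub_eq_add, sub_eq_zero]

def diffKeyMatrix (M : Finset ((Fin b → Alph) × (Fin b → Alph))) :
    Matrix M (Fin b × Alph) (ZMod 2) :=
  fun e => keyVec e.1.1 + keyVec e.1.2

theorem forall_sum_eq_iff_diffKeyMatrix_mul_eq_zero (M : Finset ((Fin b → Alph) × (Fin b → Alph)))
    (T : Fin b → Alph → σ → ZMod 2) :
    (∀ e ∈ M, ∑ i, T i (e.1 i) = ∑ i, T i (e.2 i)) ↔
      diffKeyMatrix M * of (Function.uncurry T) = 0 := by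
  have hrow (e : M) : (diffKeyMatrix M * of (Function.uncurry T)) e = 0 ↔
      ∑ i, T i (e.1.1 i) = ∑ i, T i (e.1.2 i) := by
    rw [mul_apply_eq_vecMul]
    exact keyVec_add_keyVec_vecMul_eq_zero_iff _ _ _
  simp only [Subtype.forall', ← hrow]
  exact ⟨funext, fun h e => congrFun h e⟩

end Tabulation

theorem stmt7_general {b s : ℕ}
    (M : Finset ((Fin b → (Fin s → ZMod 2)) × (Fin b → (Fin s → ZMod 2))))
    (hind : LinearIndependent (ZMod 2)
      (fun e : M => keyVec e.1.1 + keyVec e.1.2)) :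
    (Finset.univ.filter (fun T : Fin b → (Fin s → ZMod 2) → (Fin s → ZMod 2) =>
        ∀ e ∈ M, (∑ i, T i (e.1 i)) = ∑ i, T i (e.2 i))).card
        * (Fintype.card (Fin s → ZMod 2)) ^ M.card
      = Fintype.card (Fin b → (Fin s → ZMod 2) → (Fin s → ZMod 2)) := by
  have hcollisions : (Finset.univ.filter
      (fun T : Fin b → (Fin s → ZMod 2) → (Fin s → ZMod 2) =>
        ∀ e ∈ M, (∑ i, T i (e.1 i)) = ∑ i, T i (e.2 i))).card =
      Nat.card {X : Matrix (Fin b × (Fin s → ZMod 2)) (Fin s) (ZMod 2) //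
        diffKeyMatrix M * X = 0} := by
    rw [← Fintype.card_subtype, ← Nat.card_eq_fintype_card]
    exact Nat.card_congr (((Equiv.curry _ _ _).symm.trans of).subtypeEquiv
      (forall_sum_eq_iff_diffKeyMatrix_mul_eq_zero M))
  have htables : Fintype.card (Fin b → (Fin s → ZMod 2) → (Fin s → ZMod 2)) =
      Nat.card (Matrix (Fin b × (Fin s → ZMod 2)) (Fin s) (ZMod 2)) := by
    rw [← Nat.card_eq_fintype_card]
    exact Nat.card_congr ((Equiv.curry _ _ _).symm.trans of)
  have hpairs : Fintype.card (Fin s → ZMod 2) ^ M.card = Nat.card (Matrix M (Fin s) (ZMod 2)) := by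
    rw [Matrix, Nat.card_fun, Nat.card_eq_fintype_card, Nat.card_eq_fintype_card,
      Fintype.card_coe]
  rw [hcollisions, hpairs, htables]
  exact (diffKeyMatrix M).card_mul_eq_zero_mul_card_of_linearIndependent_row (Fin s) hind

/-- If `M` is a set of disjoint pairs of keys whose diff-keys are linearly independent
over `F₂`, then for a uniformly random simple tabulation `g : Σ^b → Σ`
(with `Σ = F₂^s`), the probability that `g(x) = g(y)` for all pairs `{x,y} ∈ M`
is exactly `1/|Σ|^{|M|}`. -/
theorem stmt7 {b s : ℕ}
    (M : Finset ((Fin b → (Fin s → ZMod 2)) × (Fin b → (Fin s → ZMod 2))))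
    (hne : ∀ e ∈ M, e.1 ≠ e.2)
    (hdisj : ∀ e ∈ M, ∀ f ∈ M, e ≠ f →
      e.1 ≠ f.1 ∧ e.1 ≠ f.2 ∧ e.2 ≠ f.1 ∧ e.2 ≠ f.2)
    (hind : LinearIndependent (ZMod 2)
      (fun e : M => keyVec e.1.1 + keyVec e.1.2)) :
    (Finset.univ.filter (fun T : Fin b → (Fin s → ZMod 2) → (Fin s → ZMod 2) =>
        ∀ e ∈ M, (∑ i, T i (e.1 i)) = ∑ i, T i (e.2 i))).card
        * (Fintype.card (Fin s → ZMod 2)) ^ M.card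
      = Fintype.card (Fin b → (Fin s → ZMod 2) → (Fin s → ZMod 2)) :=
  stmt7_general M hind
end

section
/- Let X = ∑_{x} J_x be a sum of indicator random variables, and let I be an event such that conditioned on I (and on any fixed values of auxiliary query hash values), for every fixed finite set S the variables (J_x)_{x∈S} restricted to I are dominated by independent Bernoulli variables with parameters p_x. If μ = ∑_x p_x, then for any δ > 0, Pr[X ≥ (1+δ)μ ∧ I] ≤ (e^δ/(1+δ)^{1+δ})^μ. -/
/-!
Since `∑_{S ⊆ T} δ^{|S|} = (1 + δ)^{|T|}`, on `I` the exponential moment `(1 + δ)^X` equals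
`∑_S δ^{|S|} 1[∀ x ∈ S, J_x]`. Integrating over `I` and using the joint moment bounds gives
`E[(1 + δ)^X; I] ≤ ∑_S δ^{|S|} ∏_{x∈S} p_x = ∏_x (1 + δ p_x) ≤ e^{δμ}`, and Markov's inequality
at the threshold `(1 + δ)μ` finishes the proof.
-/

open MeasureTheory Finset

theorem sum_pow_card_mul_prod_eq_prod_one_add {ι R : Type*} [Fintype ι] [CommSemiring R]
    (a : R) (f : ι → R) :
    ∑ S : Finset ι, a ^ #S * ∏ x ∈ S, f x = ∏ x, (1 + a * f x) := by
  rw [prod_one_add, powerset_univ]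
  exact sum_congr rfl fun S _ => by rw [prod_mul_distrib, prod_const]

open scoped Classical in
theorem sum_indicator_biInter_inter_eq_one_add_pow {Ω ι : Type*} [Fintype ι]
    (J : ι → Set Ω) (I : Set Ω) (δ : ℝ) {ω : Ω} (hω : ω ∈ I) :
    ∑ S : Finset ι, ((⋂ x ∈ S, J x) ∩ I).indicator (fun _ => δ ^ #S) ω
      = (1 + δ) ^ #{x | ω ∈ J x} := by
  have hmem : ∀ S : Finset ι,
      ω ∈ (⋂ x ∈ S, J x) ∩ I ↔ S ∈ ({x | ω ∈ J x} : Finset ι).powerset := fun S => by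
    simp [hω, subset_iff]
  calc _ = ∑ S ∈ ({x | ω ∈ J x} : Finset ι).powerset, δ ^ #S := by
        simp only [Set.indicator_apply, hmem, sum_ite_mem, univ_inter]
    _ = _ := by simpa [add_comm] using sum_pow_mul_eq_add_pow δ 1 {x | ω ∈ J x}

section

variable {Ω ι : Type*} [MeasurableSpace Ω] [Fintype ι]

theorem mul_measureReal_le_sum_mul_measureReal (P : Measure Ω) [IsFiniteMeasure P]
    (A : ι → Set Ω) {c : ι → ℝ} (hc : ∀ i, 0 ≤ c i) {B : Set Ω} {c₀ : ℝ} (hc₀ : 0 ≤ c₀)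
    (hB : ∀ ω ∈ B, c₀ ≤ ∑ i, (A i).indicator (fun _ => c i) ω) :
    c₀ * P.real B ≤ ∑ i, c i * P.real (A i) := by
  -- The `A i` need not be measurable; Markov's inequality is applied on their measurable hulls.
  set f : Ω → ℝ := fun ω => ∑ i, (toMeasurable P (A i)).indicator (fun _ => c i) ω
  have h_int : ∀ i, Integrable ((toMeasurable P (A i)).indicator fun _ => c i) P := fun i =>
    (integrable_const (c i)).indicator (measurableSet_toMeasurable P (A i))
  have hf_int : Integrable f P := integrable_finsetSum _ fun i _ => h_int i
  have hf_nonneg : 0 ≤ᵐ[P] f :=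
    ae_of_all _ fun ω => sum_nonneg fun i _ => Set.indicator_nonneg (fun _ _ => hc i) ω
  have hBf : B ⊆ {ω | c₀ ≤ f ω} := fun ω hω =>
    (hB ω hω).trans <| sum_le_sum fun i _ =>
      Set.indicator_le_indicator_of_subset (subset_toMeasurable P (A i)) (fun _ => hc i) ω
  calc c₀ * P.real B ≤ c₀ * P.real {ω | c₀ ≤ f ω} :=
      mul_le_mul_of_nonneg_left (measureReal_mono hBf) hc₀
    _ ≤ ∫ ω, f ω ∂P := mul_meas_ge_le_integral_of_nonneg hf_nonneg hf_int c₀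
    _ = ∑ i, c i * P.real (A i) := by
      rw [integral_finsetSum _ fun i _ => h_int i]
      simp [measurableSet_toMeasurable, measureReal_def, mul_comm]

theorem one_add_rpow_mul_measureReal_le (P : Measure Ω) [IsFiniteMeasure P]
    (J : ι → Set Ω) (I : Set Ω) {δ : ℝ} (hδ : 0 ≤ δ) (t : ℝ) :
    (1 + δ) ^ t * P.real ({ω | t ≤ ∑ x, (J x).indicator (fun _ => (1 : ℝ)) ω} ∩ I)
      ≤ ∑ S : Finset ι, δ ^ #S * P.real ((⋂ x ∈ S, J x) ∩ I) := by
  classical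
  refine mul_measureReal_le_sum_mul_measureReal P _ (fun S => pow_nonneg hδ _)
    (by positivity) ?_
  rintro ω ⟨hX, hI⟩
  rw [sum_indicator_biInter_inter_eq_one_add_pow J I δ hI, ← Real.rpow_natCast]
  refine Real.rpow_le_rpow_of_exponent_le (by linarith) ?_
  simpa only [Set.mem_ofPred_eq, Set.indicator_apply, sum_boole] using hX

end

/-- Chernoff upper tail bound restricted to an event `I`: if for every fixed set `S`,
`Pr[(∀ x ∈ S, J_x) ∧ I] ≤ ∏_{x∈S} p_x`, then for `μ = ∑ p_x` and `δ > 0`,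
`Pr[X ≥ (1+δ)μ ∧ I] ≤ (e^δ/(1+δ)^{1+δ})^μ` where `X = ∑ 1_{J_x}`. -/
theorem stmt14 {Ω : Type*} [MeasurableSpace Ω] (P : Measure Ω)
    [IsProbabilityMeasure P] {ι : Type*} [Fintype ι]
    (J : ι → Set Ω) (I : Set Ω) (p : ι → ℝ)
    (hp : ∀ x, p x ∈ Set.Icc (0 : ℝ) 1)
    (hmom : ∀ S : Finset ι, (P ((⋂ x ∈ S, J x) ∩ I)).toReal ≤ ∏ x ∈ S, p x)
    (δ : ℝ) (hδ : 0 < δ) :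
    (P ({ω | (1 + δ) * (∑ x, p x)
          ≤ ∑ x, (J x).indicator (fun _ => (1 : ℝ)) ω} ∩ I)).toReal
      ≤ (Real.exp δ / (1 + δ) ^ (1 + δ)) ^ (∑ x, p x) := by
  set μ := ∑ x, p x
  have hmoment : ∑ S : Finset ι, δ ^ #S * P.real ((⋂ x ∈ S, J x) ∩ I) ≤ Real.exp (δ * μ) :=
    calc _ ≤ ∑ S : Finset ι, δ ^ #S * ∏ x ∈ S, p x :=
          sum_le_sum fun S _ => mul_le_mul_of_nonneg_left (hmom S) (pow_nonneg hδ.le _)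
      _ = ∏ x, (1 + δ * p x) := sum_pow_card_mul_prod_eq_prod_one_add δ p
      _ ≤ Real.exp (δ * μ) := by
          rw [mul_sum]
          exact Real.prod_one_add_le_exp_sum _ fun x => mul_nonneg hδ.le (hp x).1
  have h1δ : 0 < 1 + δ := by linarith
  rw [Real.div_rpow (Real.exp_nonneg δ) (Real.rpow_nonneg h1δ.le _), ← Real.exp_mul,
    ← Real.rpow_mul h1δ.le, le_div_iff₀ (by positivity), mul_comm]
  exact (one_add_rpow_mul_measureReal_le P J I hδ.le _).trans hmoment
end
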